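/- A vector v = (v₀, v₁, v₂, v₃) ∈ ℂ⁴ is null for the complex Minkowski form, i.e. v₀² − v₁² − v₂² − v₃² = 0, if and only if there exist spinors o, õ ∈ ℂ² such that σ(v) is the outer product o õᵀ (the 2×2 matrix with entries σ(v)_{AB} = o_A õ_B). In other words, a complex vector is null exactly when it corresponds to a product of two 2-spinors. -/

import Mathlib

noncomputable section

open Matrix

/-- The Pauli matrices σ₁, σ₂, σ₃. -/
def pauli : Fin 3 → Matrix (Fin 2) (Fin 2) ℂ
  | 0 => !![0, 1; 1, 0]
  | 1 => !![0, -Complex.I; Complex.I, 0]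
  | 2 => !![1, 0; 0, -1]

/-- The vector–spinor correspondence σ(v) = (1/√2)(v₀ I₂ + v₁ σ₁ + v₂ σ₂ + v₃ σ₃). -/
def sigmaV (v : Fin 4 → ℂ) : Matrix (Fin 2) (Fin 2) ℂ :=
  ((Real.sqrt 2 : ℂ))⁻¹ •
    (v 0 • (1 : Matrix (Fin 2) (Fin 2) ℂ) + v 1 • pauli 0 + v 2 • pauli 1 + v 3 • pauli 2)

lemma sqrt2_ne : ((Real.sqrt 2 : ℂ)) ≠ 0 := by
  simp [Complex.ofReal_ne_zero, Real.sqrt_ne_zero']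

lemma sqrt2_sq : ((Real.sqrt 2 : ℂ)) * ((Real.sqrt 2 : ℂ)) = 2 := by
  rw [← Complex.ofReal_mul, Real.mul_self_sqrt (by norm_num : (0:ℝ) ≤ 2)]
  norm_num

lemma det_sigmaV (v : Fin 4 → ℂ) :
    (sigmaV v).det = (v 0 ^ 2 - v 1 ^ 2 - v 2 ^ 2 - v 3 ^ 2) / 2 := by
  have h2 := sqrt2_sq
  have hne := sqrt2_ne
  simp only [sigmaV, pauli, Matrix.det_fin_two, Matrix.smul_apply, Matrix.add_apply,
    Matrix.one_apply, Matrix.cons_val', Matrix.cons_val_zero, Matrix.cons_val_one,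
    Matrix.head_cons, Matrix.head_fin_const, Matrix.empty_val', Matrix.cons_val_fin_one,
    smul_eq_mul]
  field_simp
  ring_nf
  rw [show ((Real.sqrt 2 : ℂ))^2 = 2 by rw [sq]; exact h2]
  ring_nf
  simp [Complex.I_sq]
  linear_combination (2 * v 2 ^ 2) * Complex.I_sq

lemma rank_one_of_det_zero (M : Matrix (Fin 2) (Fin 2) ℂ) (h : M.det = 0) :
    ∃ o otilde : Fin 2 → ℂ, M = Matrix.vecMulVec o otilde := by
  rw [Matrix.det_fin_two] at h
  by_cases ha : M 0 0 ≠ 0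
  · have hd' : M 1 0 * M 0 1 = M 1 1 * M 0 0 := by linear_combination -h
    have hd : M 1 1 = M 1 0 * (M 0 1 / M 0 0) := by
      rw [← mul_div_assoc, hd', mul_div_cancel_right₀ _ ha]
    refine ⟨![M 0 0, M 1 0], ![1, M 0 1 / M 0 0], ?_⟩
    ext i j
    fin_cases i <;> fin_cases j <;>
      simp [Matrix.vecMulVec_apply, ha, hd, mul_div_cancel₀]
  · push_neg at ha
    by_cases hb : M 0 1 = 0
    · refine ⟨![0, 1], ![M 1 0, M 1 1], ?_⟩
      ext i j
      fin_cases i <;> fin_cases j <;> simp [Matrix.vecMulVec_apply, ha, hb]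
    · have hc : M 1 0 = 0 := by
        have : M 0 1 * M 1 0 = 0 := by rw [ha] at h; linear_combination -h
        exact (mul_eq_zero.mp this).resolve_left hb
      refine ⟨![M 0 1, M 1 1], ![0, 1], ?_⟩
      ext i j
      fin_cases i <;> fin_cases j <;> simp [Matrix.vecMulVec_apply, ha, hc]

/-- v ∈ ℂ⁴ is null for the complex Minkowski form (v₀² − v₁² − v₂² − v₃² = 0)
if and only if σ(v) is an outer product o õᵀ of two 2-spinors. -/
theorem null_iff_outer_product (v : Fin 4 → ℂ) :
    v 0 ^ 2 - v 1 ^ 2 - v 2 ^ 2 - v 3 ^ 2 = 0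
      ↔ ∃ o otilde : Fin 2 → ℂ, sigmaV v = Matrix.vecMulVec o otilde := by
  constructor
  · intro h
    exact rank_one_of_det_zero _ (by rw [det_sigmaV, h]; ring)
  · rintro ⟨o, ot, hM⟩
    have hd : (sigmaV v).det = 0 := by
      rw [hM, Matrix.det_fin_two]
      simp [Matrix.vecMulVec_apply]
      ring
    rw [det_sigmaV] at hd
    field_simp at hd
    simpa using hd
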